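/- Let {u_n} be a sequence of unit vectors in ℝ² and let T_n = S_{u_n} ∘ ⋯ ∘ S_{u_1} be the associated Steiner process acting on Lebesgue measurable subsets of ℝ² of finite measure. Suppose that for every set R that is a finite union of axis-parallel rectangles, λ(T_n R Δ R*) → 0 as n → ∞, where R* is the ball centered at the origin with λ(R*) = λ(R). Then for every Lebesgue measurable set M ⊆ ℝ² of finite Lebesgue measure, λ(T_n M Δ M*) → 0 as n → ∞. -/

import Mathlib

/-!
Steiner symmetrization is a contraction for `λ(· Δ ·)` on measurable sets. In orthonormal
coordinates `(a, t)` with `t` measured along `u`, it replaces each fibre `{t | (a, t) ∈ M}` by the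
open interval centred at `0` of the same length; two centred intervals of lengths `c, d` differ by
`|c - d|`, which is at most the measure of the symmetric difference of the two fibres, and Fubini
integrates this over `a`. Hence `λ(T_n M Δ T_n R) ≤ λ(M Δ R)` for all `n`.

A measurable `M` of finite measure is `ε`-close to a finite union `R` of rectangles: cover a compact
`K ⊆ M` by finitely many rectangles inside an open `U ⊇ M`. Two centred balls whose volumes equal
those of `R` and `M` are then `ε`-close as well, and the triangle inequality gives
`λ(T_n M Δ M*) ≤ λ(M Δ R) + λ(T_n R Δ R*) + λ(R* Δ M*) < 3ε` for large `n`.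
-/

open MeasureTheory Filter Topology

/-- The plane `ℝ²`. -/
abbrev Plane := EuclideanSpace ℝ (Fin 2)

/-- The Steiner symmetral (with open segments) of a set `M ⊆ ℝ²` in the direction of
the unit vector `u`. -/
noncomputable def steinerSymmetral (u : Plane) (M : Set Plane) : Set Plane :=
  {y | ∃ (x : Plane) (t : ℝ), inner ℝ x u = (0 : ℝ) ∧ y = x + t • u ∧
    ENNReal.ofReal (2 * |t|) < volume {s : ℝ | x + s • u ∈ M}}

/-- The Steiner process associated with a sequence of directions `u`:
`T 0 = id` and `T (n+1) = S_{u n} ∘ T n`, so that `T n = S_{u_n} ∘ ⋯ ∘ S_{u_1}`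
with 1-based indexing of the directions. -/
noncomputable def steinerProcess (u : ℕ → Plane) : ℕ → Set Plane → Set Plane
  | 0, M => M
  | n + 1, M => steinerSymmetral (u n) (steinerProcess u n M)

/-- The closed axis-parallel rectangle `[a₁, b₁] × [a₂, b₂]` in the plane. -/
def axisRect (q : ℝ × ℝ × ℝ × ℝ) : Set Plane :=
  {x | x 0 ∈ Set.Icc q.1 q.2.1 ∧ x 1 ∈ Set.Icc q.2.2.1 q.2.2.2}

open scoped ENNReal symmDiff RealInnerProductSpace

section Coordinates

variable {F : Type*} [NormedAddCommGroup F] [InnerProductSpace ℝ F]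
  (b : OrthonormalBasis (Fin 2) ℝ F)

theorem OrthonormalBasis.inner_eq_zero_and_eq_add_smul_iff {x y : F} {t : ℝ} :
    (⟪x, b 1⟫ = 0 ∧ y = x + t • b 1) ↔ (x = ⟪b 0, y⟫ • b 0 ∧ t = ⟪b 1, y⟫) := by
  constructor
  · rintro ⟨hx, rfl⟩
    have hx' := b.sum_repr' x
    rw [Fin.sum_univ_two, real_inner_comm x (b 1), hx, zero_smul, add_zero] at hx'
    rw [← hx']
    simp [inner_add_right, inner_smul_right, b.inner_eq_ite]
  · rintro ⟨rfl, rfl⟩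
    refine ⟨by simp [inner_smul_left, b.inner_eq_ite], ?_⟩
    simpa [Fin.sum_univ_two] using (b.sum_repr' y).symm

variable [MeasurableSpace F] [BorelSpace F]

noncomputable def OrthonormalBasis.coordsEquiv : F ≃ᵐ ℝ × ℝ :=
  b.measurableEquiv.trans ((MeasurableEquiv.toLp 2 (Fin 2 → ℝ)).symm.trans
    MeasurableEquiv.finTwoArrow)

theorem OrthonormalBasis.coordsEquiv_apply (y : F) : b.coordsEquiv y = (⟪b 0, y⟫, ⟪b 1, y⟫) := by
  simp [OrthonormalBasis.coordsEquiv, OrthonormalBasis.measurableEquiv, b.repr_apply_apply]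

theorem OrthonormalBasis.coordsEquiv_symm_apply (p : ℝ × ℝ) :
    b.coordsEquiv.symm p = p.1 • b 0 + p.2 • b 1 := by
  rw [MeasurableEquiv.symm_apply_eq, OrthonormalBasis.coordsEquiv_apply]
  simp [inner_add_right, inner_smul_right, b.inner_eq_ite]

theorem OrthonormalBasis.measurePreserving_coordsEquiv [FiniteDimensional ℝ F] :
    MeasurePreserving b.coordsEquiv volume volume :=
  ((volume_preserving_finTwoArrow ℝ).comp
    (EuclideanSpace.volume_preserving_symm_measurableEquiv_toLp (Fin 2))).comp
    b.measurePreserving_measurableEquiv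

end Coordinates

theorem exists_orthonormalBasis_apply_one_eq {u : Plane} (hu : ‖u‖ = 1) :
    ∃ b : OrthonormalBasis (Fin 2) ℝ Plane, b 1 = u := by
  obtain ⟨b, hb⟩ := Orthonormal.exists_orthonormalBasis_extension_of_card_eq (𝕜 := ℝ)
    (by simp) (v := fun _ : Fin 2 => u) (s := {1}) (by simp [hu])
  exact ⟨b, hb 1 rfl⟩

theorem measure_symmDiff_le_of_monotone {α ι : Type*} [MeasurableSpace α] {μ : Measure α}
    [LinearOrder ι] {f : ι → Set α} (hf : Monotone f) (hfm : ∀ i, NullMeasurableSet (f i) μ)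
    {i j : ι} (hi : μ (f i) ≠ ∞) (hj : μ (f j) ≠ ∞) {e : ℝ≥0∞}
    (hij : μ (f i) - μ (f j) ≤ e) (hji : μ (f j) - μ (f i) ≤ e) : μ (f i ∆ f j) ≤ e := by
  rcases le_total i j with h | h
  · rw [symmDiff_of_le (hf h), measure_sdiff (hf h) (hfm i) hi]
    exact hji
  · rw [symmDiff_of_ge (hf h), measure_sdiff (hf h) (hfm j) hj]
    exact hij

def centeredInterval (c : ℝ≥0∞) : Set ℝ := {s | ENNReal.ofReal (2 * |s|) < c}

theorem measurableSet_centeredInterval (c : ℝ≥0∞) : MeasurableSet (centeredInterval c) :=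
  measurableSet_lt (by fun_prop) measurable_const

theorem centeredInterval_mono : Monotone centeredInterval :=
  fun _ _ h _ hs => lt_of_lt_of_le hs h

theorem centeredInterval_eq_Ioo {c : ℝ≥0∞} (hc : c ≠ ∞) :
    centeredInterval c = Set.Ioo (-(c.toReal / 2)) (c.toReal / 2) := by
  ext s
  rw [centeredInterval, Set.mem_ofPred_eq, ENNReal.ofReal_lt_iff_lt_toReal (by positivity) hc,
    Set.mem_Ioo, ← abs_lt]
  constructor <;> intro h <;> linarith

theorem volume_centeredInterval (c : ℝ≥0∞) : volume (centeredInterval c) = c := by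
  rcases eq_or_ne c ∞ with rfl | hc
  · rw [show centeredInterval ∞ = Set.univ from
      Set.eq_univ_of_forall fun _ => ENNReal.ofReal_lt_top, Real.volume_univ]
  · rw [centeredInterval_eq_Ioo hc, Real.volume_Ioo, sub_neg_eq_add, add_halves,
      ENNReal.ofReal_toReal hc]

theorem volume_centeredInterval_symmDiff_le (s t : Set ℝ) :
    volume (centeredInterval (volume s) ∆ centeredInterval (volume t)) ≤ volume (s ∆ t) := by
  rcases eq_or_ne (volume s) ∞ with hs | hs <;> rcases eq_or_ne (volume t) ∞ with ht | ht
  · simp [hs, ht]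
  · rw [symmDiff_comm s t, measure_symmDiff_eq_top ht hs]
    exact le_top
  · rw [measure_symmDiff_eq_top hs ht]
    exact le_top
  · refine measure_symmDiff_le_of_monotone centeredInterval_mono
      (fun c => (measurableSet_centeredInterval c).nullMeasurableSet) ?_ ?_ ?_ ?_ <;>
      simp only [volume_centeredInterval]
    exacts [hs, ht, le_measure_symmDiff, symmDiff_comm s t ▸ le_measure_symmDiff]

def steinerSnd (N : Set (ℝ × ℝ)) : Set (ℝ × ℝ) :=
  {p | p.2 ∈ centeredInterval (volume (Prod.mk p.1 ⁻¹' N))}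

theorem MeasurableSet.steinerSnd {N : Set (ℝ × ℝ)} (hN : MeasurableSet N) :
    MeasurableSet (steinerSnd N) :=
  measurableSet_lt (by fun_prop) ((measurable_measure_prodMk_left hN).comp measurable_fst)

theorem volume_steinerSnd_symmDiff_le {A B : Set (ℝ × ℝ)} (hA : MeasurableSet A)
    (hB : MeasurableSet B) : volume (steinerSnd A ∆ steinerSnd B) ≤ volume (A ∆ B) := by
  rw [Measure.volume_eq_prod, Measure.prod_apply (hA.steinerSnd.symmDiff hB.steinerSnd),
    Measure.prod_apply (hA.symmDiff hB)]
  exact lintegral_mono fun a => volume_centeredInterval_symmDiff_le _ _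

theorem steinerSymmetral_eq_preimage (b : OrthonormalBasis (Fin 2) ℝ Plane) (M : Set Plane) :
    steinerSymmetral (b 1) M = b.coordsEquiv ⁻¹' steinerSnd (b.coordsEquiv.symm ⁻¹' M) := by
  ext y
  have hfiber (a : ℝ) : Prod.mk a ⁻¹' (b.coordsEquiv.symm ⁻¹' M) = {s | a • b 0 + s • b 1 ∈ M} := by
    ext s
    simp [b.coordsEquiv_symm_apply]
  simp only [steinerSymmetral, Set.mem_ofPred_eq, ← and_assoc, b.inner_eq_zero_and_eq_add_smul_iff]
  simp only [and_assoc, exists_and_left, exists_eq_left, Set.mem_preimage, b.coordsEquiv_apply,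
    steinerSnd, centeredInterval, Set.mem_ofPred_eq, hfiber]

theorem MeasurableSet.steinerSymmetral {u : Plane} (hu : ‖u‖ = 1) {M : Set Plane}
    (hM : MeasurableSet M) : MeasurableSet (steinerSymmetral u M) := by
  obtain ⟨b, rfl⟩ := exists_orthonormalBasis_apply_one_eq hu
  rw [steinerSymmetral_eq_preimage]
  exact b.coordsEquiv.measurable (b.coordsEquiv.symm.measurable hM).steinerSnd

theorem volume_steinerSymmetral_symmDiff_le {u : Plane} (hu : ‖u‖ = 1) {A B : Set Plane}
    (hA : MeasurableSet A) (hB : MeasurableSet B) :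
    volume (steinerSymmetral u A ∆ steinerSymmetral u B) ≤ volume (A ∆ B) := by
  obtain ⟨b, rfl⟩ := exists_orthonormalBasis_apply_one_eq hu
  have hφ := b.measurePreserving_coordsEquiv
  have hA' := b.coordsEquiv.symm.measurable hA
  have hB' := b.coordsEquiv.symm.measurable hB
  rw [steinerSymmetral_eq_preimage, steinerSymmetral_eq_preimage, ← Set.preimage_symmDiff,
    hφ.measure_preimage (hA'.steinerSnd.symmDiff hB'.steinerSnd).nullMeasurableSet]
  calc _ ≤ volume ((b.coordsEquiv.symm ⁻¹' A) ∆ (b.coordsEquiv.symm ⁻¹' B)) :=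
        volume_steinerSnd_symmDiff_le hA' hB'
    _ = volume (A ∆ B) := by
        rw [← Set.preimage_symmDiff, hφ.symm.measure_preimage (hA.symmDiff hB).nullMeasurableSet]

theorem MeasurableSet.steinerProcess {u : ℕ → Plane} (hu : ∀ n, ‖u n‖ = 1) {M : Set Plane}
    (hM : MeasurableSet M) (n : ℕ) : MeasurableSet (steinerProcess u n M) := by
  induction n with
  | zero => exact hM
  | succ n ih => exact ih.steinerSymmetral (hu n)

theorem volume_steinerProcess_symmDiff_le {u : ℕ → Plane} (hu : ∀ n, ‖u n‖ = 1)
    {A B : Set Plane} (hA : MeasurableSet A) (hB : MeasurableSet B) (n : ℕ) :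
    volume (steinerProcess u n A ∆ steinerProcess u n B) ≤ volume (A ∆ B) := by
  induction n with
  | zero => exact le_rfl
  | succ n ih =>
    exact (volume_steinerSymmetral_symmDiff_le (hu n) (hA.steinerProcess hu n)
      (hB.steinerProcess hu n)).trans ih

theorem exists_axisRect_mem_nhds_subset {x : Plane} {U : Set Plane} (hU : U ∈ 𝓝 x) :
    ∃ q, axisRect q ∈ 𝓝 x ∧ axisRect q ⊆ U := by
  obtain ⟨δ, hδ, hxU⟩ := Metric.mem_nhds_iff.1 hU
  refine ⟨(x 0 - δ / 2, x 0 + δ / 2, x 1 - δ / 2, x 1 + δ / 2), ?_, ?_⟩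
  · refine Filter.mem_of_superset (Metric.ball_mem_nhds x (half_pos hδ)) fun y hy => ?_
    have h0 := (PiLp.dist_apply_le y x 0).trans_lt hy
    have h1 := (PiLp.dist_apply_le y x 1).trans_lt hy
    rw [Real.dist_eq, abs_lt] at h0 h1
    exact ⟨⟨by linarith, by linarith⟩, ⟨by linarith, by linarith⟩⟩
  · rintro y ⟨⟨h0, h0'⟩, ⟨h1, h1'⟩⟩
    apply hxU
    rw [Metric.mem_ball, EuclideanSpace.dist_eq, Fin.sum_univ_two, Real.sqrt_lt' hδ,
      Real.dist_eq, Real.dist_eq, sq_abs, sq_abs]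
    nlinarith

theorem measurableSet_axisRect (q : ℝ × ℝ × ℝ × ℝ) : MeasurableSet (axisRect q) :=
  (measurableSet_Icc.preimage (by fun_prop)).inter (measurableSet_Icc.preimage (by fun_prop))

theorem exists_finset_axisRect_between {K U : Set Plane} (hK : IsCompact K) (hU : IsOpen U)
    (hKU : K ⊆ U) : ∃ s : Finset (ℝ × ℝ × ℝ × ℝ),
      K ⊆ ⋃ q ∈ s, axisRect q ∧ ⋃ q ∈ s, axisRect q ⊆ U := by
  choose! q hq_nhds hq_sub using fun x (hx : x ∈ K) =>
    exists_axisRect_mem_nhds_subset (hU.mem_nhds (hKU hx))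
  obtain ⟨t, htK, hKt⟩ := hK.elim_nhds_subcover (fun x => axisRect (q x)) hq_nhds
  refine ⟨t.image q, ?_, ?_⟩ <;> rw [Finset.set_biUnion_finset_image]
  · exact hKt
  · exact Set.iUnion₂_subset fun x hx => hq_sub x (htK x hx)

theorem exists_finset_volume_symmDiff_iUnion_axisRect_lt {M : Set Plane} (hM : MeasurableSet M)
    (hMfin : volume M ≠ ∞) {ε : ℝ≥0∞} (hε : ε ≠ 0) :
    ∃ s : Finset (ℝ × ℝ × ℝ × ℝ), volume (M ∆ ⋃ q ∈ s, axisRect q) < ε := by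
  have hε2 : ε / 2 ≠ 0 := (ENNReal.half_pos hε).ne'
  obtain ⟨K, hKM, hK, hMK⟩ := hM.exists_isCompact_sdiff_lt hMfin hε2
  obtain ⟨U, hMU, hU, -, hUM⟩ := hM.exists_isOpen_sdiff_lt hMfin hε2
  obtain ⟨s, hKs, hsU⟩ := exists_finset_axisRect_between hK hU (hKM.trans hMU)
  refine ⟨s, ?_⟩
  calc volume (M ∆ ⋃ q ∈ s, axisRect q) ≤ volume ((M \ K) ∪ (U \ M)) := by
        refine measure_mono fun x hx => ?_
        rcases hx with ⟨hxM, hxs⟩ | ⟨hxs, hxM⟩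
        exacts [Or.inl ⟨hxM, fun hxK => hxs (hKs hxK)⟩, Or.inr ⟨hsU hxs, hxM⟩]
    _ ≤ volume (M \ K) + volume (U \ M) := measure_union_le _ _
    _ < ε / 2 + ε / 2 := ENNReal.add_lt_add hMK hUM
    _ = ε := ENNReal.add_halves ε

theorem exists_measure_ball_eq {E : Type*} [NormedAddCommGroup E] [NormedSpace ℝ E]
    [MeasurableSpace E] [BorelSpace E] [FiniteDimensional ℝ E] [Nontrivial E]
    (μ : Measure E) [μ.IsAddHaarMeasure] (x : E) {v : ℝ≥0∞} (hv : v ≠ ∞) :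
    ∃ ρ : ℝ, 0 ≤ ρ ∧ μ (Metric.ball x ρ) = v := by
  have hB0 : μ (Metric.ball 0 1) ≠ 0 := (Metric.measure_ball_pos μ 0 one_pos).ne'
  have hBtop : μ (Metric.ball 0 1) ≠ ∞ := measure_ball_lt_top.ne
  refine ⟨(v / μ (Metric.ball 0 1)).toReal ^ ((Module.finrank ℝ E)⁻¹ : ℝ), by positivity, ?_⟩
  rw [Measure.addHaar_ball μ x (by positivity),
    Real.rpow_inv_natCast_pow ENNReal.toReal_nonneg Module.finrank_pos.ne',
    ENNReal.ofReal_toReal (ENNReal.div_ne_top hv hB0), ENNReal.div_mul_cancel hB0 hBtop]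

theorem measure_ball_symmDiff_ball_le {α : Type*} [PseudoMetricSpace α] [ProperSpace α]
    [MeasurableSpace α] [OpensMeasurableSpace α] {μ : Measure α} [IsFiniteMeasureOnCompacts μ]
    {x : α} {ρ r : ℝ} {A B : Set α} (hA : μ (Metric.ball x ρ) = μ A)
    (hB : μ (Metric.ball x r) = μ B) :
    μ (Metric.ball x ρ ∆ Metric.ball x r) ≤ μ (A ∆ B) :=
  measure_symmDiff_le_of_monotone (fun _ _ => Metric.ball_subset_ball)
    (fun _ => measurableSet_ball.nullMeasurableSet) measure_ball_lt_top.ne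
    measure_ball_lt_top.ne (hA ▸ hB ▸ le_measure_symmDiff)
    (hA ▸ hB ▸ symmDiff_comm A B ▸ le_measure_symmDiff)

/-- Let `T_n = S_{u_n} ∘ ⋯ ∘ S_{u_1}` be the Steiner process of a
sequence of unit vectors `{u_n}` in `ℝ²`.  If `λ(T_n R Δ R*) → 0` for every finite
union `R` of axis-parallel rectangles (where `R*` is the ball centered at the origin
with `λ(R*) = λ(R)`), then `λ(T_n M Δ M*) → 0` for every measurable set `M ⊆ ℝ²` of
finite measure. -/
theorem stmt_11 (u : ℕ → Plane) (hu : ∀ n, ‖u n‖ = 1)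
    (hrect : ∀ (s : Finset (ℝ × ℝ × ℝ × ℝ)) (R : Set Plane),
      R = ⋃ q ∈ s, axisRect q →
      ∀ r : ℝ, 0 ≤ r → volume (Metric.ball (0 : Plane) r) = volume R →
        Tendsto (fun n => volume (symmDiff (steinerProcess u n R)
          (Metric.ball (0 : Plane) r))) atTop (𝓝 0)) :
    ∀ M : Set Plane, MeasurableSet M → volume M < ⊤ →
      ∀ r : ℝ, 0 ≤ r → volume (Metric.ball (0 : Plane) r) = volume M →
        Tendsto (fun n => volume (symmDiff (steinerProcess u n M)
          (Metric.ball (0 : Plane) r))) atTop (𝓝 0) := by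
  intro M hM hMfin r _ hMr
  rw [ENNReal.tendsto_atTop_zero]
  intro ε hε
  have hε3 : 0 < ε / 3 := ENNReal.div_pos hε.ne' (by norm_num)
  obtain ⟨s, hs⟩ := exists_finset_volume_symmDiff_iUnion_axisRect_lt hM hMfin.ne hε3.ne'
  set R := ⋃ q ∈ s, axisRect q
  have hR : MeasurableSet R := Finset.measurableSet_biUnion s fun q _ => measurableSet_axisRect q
  have hRfin : volume R ≠ ∞ := (measure_ne_top_iff_of_symmDiff hs.ne_top).1 hMfin.ne
  obtain ⟨ρ, hρ, hRρ⟩ := exists_measure_ball_eq volume (0 : Plane) hRfin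
  obtain ⟨N, hN⟩ := ENNReal.tendsto_atTop_zero.1 (hrect s R rfl ρ hρ hRρ) _ hε3
  refine ⟨N, fun n hn => ?_⟩
  calc volume (steinerProcess u n M ∆ Metric.ball 0 r)
      ≤ volume (steinerProcess u n M ∆ steinerProcess u n R)
        + volume (steinerProcess u n R ∆ Metric.ball 0 ρ)
        + volume (Metric.ball 0 ρ ∆ Metric.ball (0 : Plane) r) :=
        (measure_symmDiff_le _ _ _).trans (add_le_add_left (measure_symmDiff_le _ _ _) _)
    _ ≤ ε / 3 + ε / 3 + ε / 3 := by
        gcongr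
        · exact (volume_steinerProcess_symmDiff_le hu hM hR n).trans hs.le
        · exact hN n hn
        · exact (measure_ball_symmDiff_ball_le hRρ hMr).trans (symmDiff_comm M R ▸ hs.le)
    _ = ε := ENNReal.add_thirds ε
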